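/- arXiv:math/0602220 — 8 statements merged into one kernel-verified Lean document; each statement's English description precedes it below -/
import Mathlib

section
/- Let A be an integral domain containing a field k of characteristic zero, and let d be a k-derivation on A. Then the kernel of d is algebraically closed in A; that is, every element of A that is algebraic over ker d belongs to ker d. -/
open Polynomial

lemma deriv_eval_key {k A : Type*} [Field k] [CommRing A] [Algebra k A]
    (d : Derivation k A A) (a : A) (p : A[X]) (hc : ∀ i, d (p.coeff i) = 0) :
    d (p.eval a) = p.derivative.eval a * d a := by
  rw [Polynomial.eval_eq_sum_range, map_sum, Polynomial.derivative_eval,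
    p.sum_over_range (f := fun n b => b * (n : A) * a ^ (n - 1)) (fun n => by simp),
    Finset.sum_mul]
  refine Finset.sum_congr rfl fun i _ => ?_
  rw [d.leibniz, hc, d.leibniz_pow, smul_eq_mul, nsmul_eq_mul, smul_eq_mul]
  simp [mul_assoc]

lemma aux_alg_closed {k A : Type*} [Field k] [CharZero k] [CommRing A] [IsDomain A]
    [Algebra k A] (d : Derivation k A A) (a : A) :
    ∀ n (p : A[X]), p.natDegree ≤ n → p ≠ 0 → (∀ i, d (p.coeff i) = 0) →
      p.eval a = 0 → d a = 0 := by
  have : CharZero A := charZero_of_injective_algebraMap (algebraMap k A).injective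
  intro n
  induction n with
  | zero =>
    intro p hdeg hp hc he
    rw [Polynomial.eq_C_of_natDegree_le_zero hdeg] at hp he
    rw [Polynomial.eval_C] at he
    exact absurd (by rw [he]; simp) hp
  | succ n ih =>
    intro p hdeg hp hc he
    have key := deriv_eval_key d a p hc
    rw [he, map_zero] at key
    rcases mul_eq_zero.mp key.symm with h | h
    · -- derivative of p evaluates to 0; recurse
      by_cases hd0 : p.derivative = 0
      · have h0 : p.natDegree = 0 := Polynomial.natDegree_eq_zero_of_derivative_eq_zero hd0
        rw [Polynomial.eq_C_of_natDegree_le_zero h0.le] at hp he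
        rw [Polynomial.eval_C] at he
        exact absurd (by rw [he]; simp) hp
      · refine ih p.derivative ?_ hd0 ?_ h
        · by_cases hpn : p.natDegree = 0
          · have : p.derivative = 0 := by
              rw [Polynomial.eq_C_of_natDegree_le_zero hpn.le]; simp
            exact absurd this hd0
          · have := Polynomial.natDegree_derivative_lt hpn
            omega
        · intro i
          rw [Polynomial.coeff_derivative, d.leibniz, hc]
          simp
    · exact h

/-- The kernel of a k-derivation on an integral domain A containing a field k of
characteristic zero is algebraically closed in A: any element of A satisfying a
nonzero polynomial with coefficients in `ker d` lies in `ker d`. -/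
theorem kernel_derivation_algebraically_closed
    (k A : Type*) [Field k] [CharZero k] [CommRing A] [IsDomain A] [Algebra k A]
    (d : Derivation k A A) (a : A) (p : Polynomial A)
    (hp : p ≠ 0) (hcoeff : ∀ i, d (p.coeff i) = 0) (heval : p.eval a = 0) :
    d a = 0 :=
  aux_alg_closed d a p.natDegree p le_rfl hp hcoeff heval
end

section
/- Let A be an integral domain containing a field k of characteristic zero, let d1, d2 be k-derivations on A, and suppose there exist x1, x2 ∈ A with d1(x1) = 1, d2(x2) = 1, d1(x2) = 0, d2(x1) = 0. Then x1 and x2 are algebraically independent over k. -/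
/-!
If `P(x₁, x₂) = 0`, then `∂ᵢP(x₁, x₂) = dᵢ(P(x₁, x₂)) = 0`, so the relations of `(x₁, x₂)` are
stable under both partial derivatives, and a nonzero `∂ᵢP` has smaller total degree than `P`. A
relation of minimal degree therefore has vanishing partial derivatives, so in characteristic zero
it is a constant, hence `0`.
-/

open MvPolynomial

namespace MvPolynomial

variable {σ R : Type*} [CommSemiring R]

theorem totalDegree_pderiv_lt {i : σ} {P : MvPolynomial σ R} (h : pderiv i P ≠ 0) :
    (pderiv i P).totalDegree < P.totalDegree := by
  classical
  obtain ⟨m, hm, hdeg⟩ := Finset.exists_mem_eq_sup _ (support_nonempty.2 h)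
    fun s => s.sum fun _ e => e
  -- the monomial `m` of top degree in `∂ᵢP` comes from the monomial `m + eᵢ` of `P`
  have hcoeff : coeff (m + Finsupp.single i 1) P ≠ 0 := by
    intro h0
    exact mem_support_iff.1 hm (by rw [coeff_pderiv, h0, zero_mul])
  have hle := le_totalDegree (mem_support_iff.2 hcoeff)
  rw [Finsupp.sum_add_index' (fun _ => rfl) (fun _ _ _ => rfl)] at hle
  rw [totalDegree, hdeg]
  simpa using hle

theorem eq_C_of_forall_pderiv_eq_zero [IsAddTorsionFree R] {P : MvPolynomial σ R}
    (h : ∀ i, pderiv i P = 0) : P = C (coeff 0 P) := by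
  classical
  ext m
  rw [coeff_C]
  split_ifs with hm
  · rw [hm]
  obtain ⟨i, hi⟩ : ∃ i, m i ≠ 0 := by
    by_contra! hzero
    exact hm (Finsupp.ext hzero).symm
  have hsplit : m - Finsupp.single i 1 + Finsupp.single i 1 = m :=
    tsub_add_cancel_of_le (Finsupp.single_le_iff.2 (Nat.one_le_iff_ne_zero.2 hi))
  have hcoeff := coeff_pderiv (i := i) P (m - Finsupp.single i 1)
  rw [h i, coeff_zero, hsplit, eq_comm, mul_comm, ← Nat.cast_succ, ← nsmul_eq_mul] at hcoeff
  exact (nsmul_eq_zero_iff_right (Nat.succ_ne_zero _)).1 hcoeff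

end MvPolynomial

theorem Derivation.apply_aeval_eq_aeval_pderiv {σ R A : Type*} [CommSemiring R] [CommSemiring A]
    [Algebra R A] (d : Derivation R A A) (v : σ → A) (i : σ) (hself : d (v i) = 1)
    (hother : ∀ j, j ≠ i → d (v j) = 0) (P : MvPolynomial σ R) :
    d (aeval v P) = aeval v (pderiv i P) := by
  classical
  induction P using MvPolynomial.induction_on with
  | C a => simp
  | add p q hp hq => simp only [map_add, hp, hq]
  | mul_X p j hp =>
    rw [map_mul, Derivation.leibniz, hp, pderiv_mul, pderiv_X]
    rcases eq_or_ne j i with rfl | hji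
    · simp only [aeval_X, hself, smul_eq_mul, mul_one, Pi.single_eq_same, map_add, map_mul]
      ring
    · simp only [aeval_X, hother j hji, smul_eq_mul, mul_zero, zero_add, hji,
        Pi.single_eq_of_ne, ne_eq, not_false_eq_true, add_zero, map_mul]
      ring

theorem algebraicIndependent_of_dual_derivations {ι k A : Type*} [Field k] [CharZero k]
    [CommRing A] [Nontrivial A] [Algebra k A] (v : ι → A) (d : ι → Derivation k A A)
    (hself : ∀ i, d i (v i) = 1) (hother : ∀ i j, j ≠ i → d i (v j) = 0) :
    AlgebraicIndependent k v := by
  rw [algebraicIndependent_iff]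
  intro P hP
  induction hn : P.totalDegree using Nat.strong_induction_on generalizing P with
  | _ n ih =>
  have hpderiv (i : ι) : pderiv i P = 0 := by
    by_contra hne
    have hzero : aeval v (pderiv i P) = 0 := by
      rw [← (d i).apply_aeval_eq_aeval_pderiv v i (hself i) (hother i), hP, map_zero]
    exact hne (ih _ (hn ▸ totalDegree_pderiv_lt hne) _ hzero rfl)
  rw [eq_C_of_forall_pderiv_eq_zero hpderiv] at hP ⊢
  rw [aeval_C, map_eq_zero_iff _ (algebraMap k A).injective] at hP
  rw [hP, map_zero]

/-- If d₁, d₂ are k-derivations on an integral domain A containing a field k of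
characteristic zero, and x₁, x₂ ∈ A satisfy dᵢ(xᵢ) = 1, dᵢ(xⱼ) = 0 for i ≠ j,
then x₁ and x₂ are algebraically independent over k. -/
theorem alg_indep_of_dual_derivations
    (k A : Type*) [Field k] [CharZero k] [CommRing A] [IsDomain A] [Algebra k A]
    (d1 d2 : Derivation k A A) (x1 x2 : A)
    (h11 : d1 x1 = 1) (h22 : d2 x2 = 1) (h12 : d1 x2 = 0) (h21 : d2 x1 = 0) :
    AlgebraicIndependent k ![x1, x2] := by
  refine algebraicIndependent_of_dual_derivations ![x1, x2] ![d1, d2] (fun i => ?_) fun i j => ?_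
  · fin_cases i <;> assumption
  · fin_cases i <;> fin_cases j <;> simp [h12, h21]
end

section
/- Let R be a commutative domain with identity of characteristic zero, and for a positive integer m let δ_m be the R-derivation on R[x1,x2] defined by δ_m = x1^m ∂/∂x1 + x2^m ∂/∂x2. Then the kernel of δ_m is exactly R, i.e. δ_m(P) = 0 for P ∈ R[x1,x2] implies P ∈ R. -/
open MvPolynomial

/-!
Write `δ = X₀^(k+1) ∂₀ + X₁^(k+1) ∂₁` and `c_d` for the coefficient of `X^d` in `P`. Comparing
coefficients of `X^(d + k e₀)` in `δ P = 0` gives `d₀ c_d + (d₁ - k) c_(d + k e₀ - k e₁) = 0`.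
For `k = 0` this is Euler's relation `(d₀ + d₁) c_d = 0`; for `k > 0` the second exponent still has
positive `X₀`-degree and smaller `X₁`-degree, so induction on `d₁` kills every `c_d` with `d₀ > 0`.
The symmetric relation at `X^(d + k e₁)` then kills every `c_d` with `d₁ > 0`.
-/

/-- For `d i ≤ k` both sides vanish, the right one through truncated subtraction. -/
theorem MvPolynomial.coeff_X_pow_succ_mul_pderiv {σ R : Type*} [CommSemiring R] [DecidableEq σ]
    (i : σ) (k : ℕ) (p : MvPolynomial σ R) (d : σ →₀ ℕ) :
    coeff d (X i ^ (k + 1) * pderiv i p) =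
      ((d i - k : ℕ) : R) * coeff (d - Finsupp.single i k) p := by
  rw [X_pow_eq_monomial, coeff_monomial_mul', one_mul]
  split_ifs with hle <;> rw [Finsupp.single_le_iff] at hle
  · have hexp : d - Finsupp.single i (k + 1) + Finsupp.single i 1 = d - Finsupp.single i k := by
      ext j
      rcases eq_or_ne j i with rfl | hj
      · simp only [Finsupp.coe_add, Finsupp.coe_tsub, Pi.add_apply, Pi.sub_apply,
          Finsupp.single_eq_same]
        omega
      · simp [hj.symm]
    rw [coeff_pderiv, hexp, mul_comm, Finsupp.tsub_apply, Finsupp.single_eq_same,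
      show d i - k = d i - (k + 1) + 1 by omega, Nat.cast_succ]
  · rw [Nat.sub_eq_zero_of_le (by omega), Nat.cast_zero, zero_mul]

namespace MvPolynomial.KernelDelta

variable {R : Type*} [CommSemiring R] {k : ℕ} {P : MvPolynomial (Fin 2) R}

theorem coeff_relation (h : X 0 ^ (k + 1) * pderiv 0 P + X 1 ^ (k + 1) * pderiv 1 P = 0)
    (e : Fin 2 →₀ ℕ) :
    ((e 0 - k : ℕ) : R) * coeff (e - Finsupp.single 0 k) P
      + ((e 1 - k : ℕ) : R) * coeff (e - Finsupp.single 1 k) P = 0 := by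
  simpa only [coeff_add, coeff_X_pow_succ_mul_pderiv, coeff_zero] using congrArg (coeff e) h

variable [NoZeroDivisors R] [CharZero R]

theorem coeff_eq_zero_of_apply_zero_pos
    (h : X 0 ^ (k + 1) * pderiv 0 P + X 1 ^ (k + 1) * pderiv 1 P = 0)
    (d : Fin 2 →₀ ℕ) (hd : 0 < d 0) : coeff d P = 0 := by
  induction hn : d 1 using Nat.strong_induction_on generalizing d with
  | _ n ih =>
  have hrel := coeff_relation h (d + Finsupp.single 0 k)
  simp only [Finsupp.coe_add, Pi.add_apply, Finsupp.single_eq_same, add_tsub_cancel_right,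
    Finsupp.single_eq_of_ne one_ne_zero, add_zero] at hrel
  rcases Nat.eq_zero_or_pos k with rfl | hk
  · simp only [Finsupp.single_zero, add_zero, tsub_zero, ← add_mul, ← Nat.cast_add] at hrel
    exact (mul_eq_zero.mp hrel).resolve_left (Nat.cast_ne_zero.mpr (by omega))
  · have hshift :
        ((d 1 - k : ℕ) : R) * coeff (d + Finsupp.single 0 k - Finsupp.single 1 k) P = 0 := by
      rcases Nat.eq_zero_or_pos (d 1 - k) with hle | hlt
      · rw [hle, Nat.cast_zero, zero_mul]
      · rw [ih (d 1 - k) (by omega) _ (by simp [hd]) (by simp), mul_zero]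
    rw [hshift, add_zero] at hrel
    exact (mul_eq_zero.mp hrel).resolve_left (Nat.cast_ne_zero.mpr hd.ne')

theorem coeff_eq_zero_of_apply_one_pos
    (h : X 0 ^ (k + 1) * pderiv 0 P + X 1 ^ (k + 1) * pderiv 1 P = 0)
    (d : Fin 2 →₀ ℕ) (hd : 0 < d 1) : coeff d P = 0 := by
  have hrel := coeff_relation h (d + Finsupp.single 1 k)
  simp only [Finsupp.coe_add, Pi.add_apply, Finsupp.single_eq_same, add_tsub_cancel_right,
    Finsupp.single_eq_of_ne zero_ne_one, add_zero] at hrel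
  have hshift :
      ((d 0 - k : ℕ) : R) * coeff (d + Finsupp.single 1 k - Finsupp.single 0 k) P = 0 := by
    rcases Nat.eq_zero_or_pos (d 0 - k) with hle | hlt
    · rw [hle, Nat.cast_zero, zero_mul]
    · rw [coeff_eq_zero_of_apply_zero_pos h _ (by simpa using hlt), mul_zero]
  rw [hshift, zero_add] at hrel
  exact (mul_eq_zero.mp hrel).resolve_left (Nat.cast_ne_zero.mpr hd.ne')

end MvPolynomial.KernelDelta

open MvPolynomial.KernelDelta in
/-- For a commutative domain R of characteristic zero and m ≥ 1, the kernel of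
the derivation δₘ = x₁^m ∂/∂x₁ + x₂^m ∂/∂x₂ on R[x₁,x₂] is exactly R. -/
theorem kernel_delta_m_eq_constants
    (R : Type*) [CommRing R] [IsDomain R] [CharZero R] (m : ℕ) (hm : 0 < m)
    (P : MvPolynomial (Fin 2) R)
    (h : (X 0) ^ m * pderiv 0 P + (X 1) ^ m * pderiv 1 P = 0) :
    ∃ r : R, P = C r := by
  obtain ⟨k, rfl⟩ : ∃ k, m = k + 1 := ⟨m - 1, by omega⟩
  refine ⟨coeff 0 P, ext _ _ fun d => ?_⟩
  rw [coeff_C]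
  split_ifs with hd
  · rw [hd]
  · have hpos : 0 < d 0 ∨ 0 < d 1 := by
      by_contra! hle
      exact hd (Finsupp.ext (Fin.forall_fin_two.mpr ⟨Nat.le_zero.mp hle.1, Nat.le_zero.mp hle.2⟩)).symm
    rcases hpos with h0 | h1
    · exact coeff_eq_zero_of_apply_zero_pos h d h0
    · exact coeff_eq_zero_of_apply_one_pos h d h1
end

section
/- Let R be a commutative domain of characteristic zero, m ≥ 1, and δ_m = x1^m ∂/∂x1 + x2^m ∂/∂x2 on R[x1,x2]. Let P, Q ∈ R[x1,x2] with Q homogeneous of total degree k in x1, x2, and suppose δ_m(P) + x1·x2^m·Q = 0. If m ≥ k + 4, then P ∈ R and Q = 0. -/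
/-!
Write `P a b` for the coefficient of `x₁ ^ a * x₂ ^ b` in `P`. For `b < m` only the `x₁`-term of
`δₘ P` reaches the monomial `x₁ ^ (a + m) * x₂ ^ b`, so `(a + 1) P (a + 1) b = 0`. At
`x₁ ^ (i + 1) * x₂ ^ (j + m)` with `i + j = k < m - 1` the relation then reads
`(j + 1) P (i + 1) (j + 1) + Q i j = 0`, with the first term already known to vanish; so `Q = 0`.
Then `δₘ P = 0`, whose coefficient at `x₁ ^ (a + m) * x₂ ^ (b + m)` is
`(a + 1) P (a + 1) (b + m) + (b + 1) P (a + m) (b + 1) = 0`: for `m ≥ 2` the second exponent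
drops from `b + m` to `b + 1`, and induction on it kills every coefficient involving `x₁`, and
then every pure power of `x₂`.
-/

open MvPolynomial

namespace MvPolynomial

variable {σ R : Type*} [CommSemiring R]

theorem coeff_add_single_X_pow_mul (μ : σ →₀ ℕ) (i : σ) (n : ℕ) (p : MvPolynomial σ R) :
    coeff (μ + Finsupp.single i n) (X i ^ n * p) = coeff μ p := by
  rw [X_pow_eq_monomial, add_comm, coeff_monomial_mul, one_mul]

theorem coeff_X_pow_mul_of_lt {μ : σ →₀ ℕ} {i : σ} {n : ℕ} (h : μ i < n)
    (p : MvPolynomial σ R) : coeff μ (X i ^ n * p) = 0 := by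
  rw [X_pow_eq_monomial, coeff_monomial_mul', if_neg]
  rwa [Finsupp.single_le_iff, not_le]

theorem coeff_add_single_X_pow_mul_pderiv (μ : σ →₀ ℕ) (i : σ) (n : ℕ)
    (p : MvPolynomial σ R) :
    coeff (μ + Finsupp.single i n) (X i ^ n * pderiv i p) =
      coeff (μ + Finsupp.single i 1) p * (μ i + 1) := by
  rw [coeff_add_single_X_pow_mul, coeff_pderiv]

end MvPolynomial

namespace Delta

/-- The exponent of `x₁ ^ a * x₂ ^ b`; the variables `x₁, x₂` are `X 0, X 1`. -/
noncomputable def expPair (a b : ℕ) : Fin 2 →₀ ℕ :=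
  Finsupp.single 0 a + Finsupp.single 1 b

@[simp] theorem expPair_apply_zero (a b : ℕ) : expPair a b 0 = a := by
  simp [expPair]

@[simp] theorem expPair_apply_one (a b : ℕ) : expPair a b 1 = b := by
  simp [expPair]

theorem expPair_add_single_zero (a b n : ℕ) :
    expPair a b + Finsupp.single 0 n = expPair (a + n) b := by
  rw [expPair, expPair, add_right_comm, ← Finsupp.single_add]

theorem expPair_add_single_one (a b n : ℕ) :
    expPair a b + Finsupp.single 1 n = expPair a (b + n) := by
  rw [expPair, expPair, add_assoc, ← Finsupp.single_add]

theorem expPair_apply_self (d : Fin 2 →₀ ℕ) : expPair (d 0) (d 1) = d := by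
  ext i
  fin_cases i <;> simp

theorem expPair_eq_zero_iff {a b : ℕ} : expPair a b = 0 ↔ a = 0 ∧ b = 0 := by
  refine ⟨fun h => ⟨by simpa using DFunLike.congr_fun h 0, by simpa using DFunLike.congr_fun h 1⟩,
    ?_⟩
  rintro ⟨rfl, rfl⟩
  simp [expPair]

theorem degree_expPair (a b : ℕ) : (expPair a b).degree = a + b := by
  rw [Finsupp.degree_eq_sum, Fin.sum_univ_two, expPair_apply_zero, expPair_apply_one]

variable {R : Type*} [CommSemiring R]

noncomputable def delta (m : ℕ) (P : MvPolynomial (Fin 2) R) : MvPolynomial (Fin 2) R :=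
  X 0 ^ m * pderiv 0 P + X 1 ^ m * pderiv 1 P

variable {m : ℕ} (P : MvPolynomial (Fin 2) R)

theorem coeff_delta_of_lt_right {a b : ℕ} (hb : b < m) :
    coeff (expPair (a + m) b) (delta m P) = coeff (expPair (a + 1) b) P * (a + 1) := by
  rw [delta, coeff_add, coeff_X_pow_mul_of_lt (i := 1) (by simpa using hb), add_zero,
    ← expPair_add_single_zero, coeff_add_single_X_pow_mul_pderiv, expPair_add_single_zero,
    expPair_apply_zero]

theorem coeff_delta_of_lt_left {a b : ℕ} (ha : a < m) :
    coeff (expPair a (b + m)) (delta m P) = coeff (expPair a (b + 1)) P * (b + 1) := by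
  rw [delta, coeff_add, coeff_X_pow_mul_of_lt (i := 0) (by simpa using ha), zero_add,
    ← expPair_add_single_one, coeff_add_single_X_pow_mul_pderiv, expPair_add_single_one,
    expPair_apply_one]

theorem coeff_delta_add_add (a b : ℕ) :
    coeff (expPair (a + m) (b + m)) (delta m P) =
      coeff (expPair (a + 1) (b + m)) P * (a + 1) +
        coeff (expPair (a + m) (b + 1)) P * (b + 1) := by
  rw [delta, coeff_add, ← expPair_add_single_zero a, coeff_add_single_X_pow_mul_pderiv,
    expPair_add_single_zero, expPair_apply_zero, expPair_add_single_zero,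
    ← expPair_add_single_one (a + m), coeff_add_single_X_pow_mul_pderiv,
    expPair_add_single_one, expPair_apply_one]

theorem coeff_X_mul_X_pow_mul_of_lt {a b : ℕ} (hb : b < m) :
    coeff (expPair a b) (X 0 * X 1 ^ m * P) = 0 := by
  rw [mul_comm (X 0), mul_assoc, coeff_X_pow_mul_of_lt (by simpa using hb)]

theorem coeff_X_mul_X_pow_mul_add_add (a b : ℕ) :
    coeff (expPair (a + 1) (b + m)) (X 0 * X 1 ^ m * P) = coeff (expPair a b) P := by
  rw [mul_comm (X 0), mul_assoc, ← expPair_add_single_one, coeff_add_single_X_pow_mul,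
    ← expPair_add_single_zero, add_comm, coeff_X_mul]

variable [NoZeroDivisors R] [CharZero R] {P}

theorem coeff_expPair_succ_of_delta_add_eq_zero {Q : MvPolynomial (Fin 2) R}
    (h : delta m P + X 0 * X 1 ^ m * Q = 0) {a b : ℕ} (hb : b < m) :
    coeff (expPair (a + 1) b) P = 0 := by
  have hc := congrArg (coeff (expPair (a + m) b)) h
  rw [coeff_add, coeff_delta_of_lt_right P hb, coeff_X_mul_X_pow_mul_of_lt Q hb, add_zero,
    coeff_zero] at hc
  exact (mul_eq_zero.mp hc).resolve_right (Nat.cast_add_one_ne_zero a)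

theorem eq_zero_of_delta_add_eq_zero {Q : MvPolynomial (Fin 2) R} {k : ℕ}
    (hQ : Q.IsHomogeneous k) (hkm : k + 2 ≤ m) (h : delta m P + X 0 * X 1 ^ m * Q = 0) :
    Q = 0 := by
  ext d
  rw [coeff_zero, ← expPair_apply_self d]
  by_cases hd : d 0 + d 1 = k
  · have hc := congrArg (coeff (expPair (d 0 + 1) (d 1 + m))) h
    rwa [coeff_add, coeff_delta_of_lt_left P (by omega),
      coeff_expPair_succ_of_delta_add_eq_zero h (by omega), zero_mul, zero_add,
      coeff_X_mul_X_pow_mul_add_add, coeff_zero] at hc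
  · exact hQ.coeff_eq_zero (by rwa [degree_expPair])

theorem eq_C_of_delta_eq_zero (hm : 2 ≤ m) (h : delta m P = 0) : P = C (coeff 0 P) := by
  have hx₁ : ∀ b a, coeff (expPair (a + 1) b) P = 0 := by
    intro b
    induction b using Nat.strong_induction_on with
    | _ b ih =>
      intro a
      rcases lt_or_ge b m with hb | hb
      · exact coeff_expPair_succ_of_delta_add_eq_zero (Q := 0) (by simpa using h) hb
      · obtain ⟨c, rfl⟩ := Nat.exists_eq_add_of_le' hb
        have hc := congrArg (coeff (expPair (a + m) (c + m))) h
        have hprev := ih (c + 1) (by omega) (a + m - 1)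
        rw [Nat.sub_add_cancel (by omega)] at hprev
        rw [coeff_delta_add_add, hprev, zero_mul, add_zero, coeff_zero] at hc
        exact (mul_eq_zero.mp hc).resolve_right (Nat.cast_add_one_ne_zero a)
  have hx₂ : ∀ b, coeff (expPair 0 (b + 1)) P = 0 := by
    intro b
    have hc := congrArg (coeff (expPair 0 (b + m))) h
    rw [coeff_delta_of_lt_left P (by omega), coeff_zero] at hc
    exact (mul_eq_zero.mp hc).resolve_right (Nat.cast_add_one_ne_zero b)
  ext d
  obtain ⟨a, b, rfl⟩ : ∃ a b, d = expPair a b := ⟨d 0, d 1, (expPair_apply_self d).symm⟩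
  simp only [coeff_C, eq_comm (a := (0 : Fin 2 →₀ ℕ)), expPair_eq_zero_iff]
  rcases a with _ | a
  · rcases b with _ | b
    · simp [expPair_eq_zero_iff.mpr ⟨rfl, rfl⟩]
    · simp [hx₂]
  · simp [hx₁]

end Delta

open Delta

theorem delta_m_relation_forces_trivial_general
    (R : Type*) [CommRing R] [IsDomain R] [CharZero R] (m k : ℕ)
    (P Q : MvPolynomial (Fin 2) R) (hQ : Q.IsHomogeneous k)
    (h : (X 0) ^ m * pderiv 0 P + (X 1) ^ m * pderiv 1 P + X 0 * (X 1) ^ m * Q = 0)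
    (hmk : m ≥ k + 4) :
    (∃ r : R, P = C r) ∧ Q = 0 := by
  have hQ0 : Q = 0 := eq_zero_of_delta_add_eq_zero hQ (by omega) h
  have hδ : delta m P = 0 := by simpa [delta, hQ0] using h
  exact ⟨⟨_, eq_C_of_delta_eq_zero (by omega) hδ⟩, hQ0⟩

/-- Let δₘ = x₁^m ∂/∂x₁ + x₂^m ∂/∂x₂ on R[x₁,x₂], R a domain of characteristic
zero, m ≥ 1. If Q is homogeneous of degree k, δₘ(P) + x₁·x₂^m·Q = 0 and
m ≥ k + 4, then P is a constant and Q = 0. -/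
theorem delta_m_relation_forces_trivial
    (R : Type*) [CommRing R] [IsDomain R] [CharZero R] (m k : ℕ) (hm : 1 ≤ m)
    (P Q : MvPolynomial (Fin 2) R) (hQ : Q.IsHomogeneous k)
    (h : (X 0) ^ m * pderiv 0 P + (X 1) ^ m * pderiv 1 P + X 0 * (X 1) ^ m * Q = 0)
    (hmk : m ≥ k + 4) :
    (∃ r : R, P = C r) ∧ Q = 0 :=
  delta_m_relation_forces_trivial_general R m k P Q hQ h hmk
end

section
/- Let A be an integral k-algebra of finite type over a field k of characteristic zero, and let F be any family of k-derivations on A. Then there exists a finite subfamily {d1, ..., dr} ⊆ F such that the intersection of the kernels of all derivations in F equals ker d1 ∩ ... ∩ ker dr. -/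
/-- For any family F of k-derivations on an integral finite-type k-algebra A
(char k = 0), there is a finite subfamily whose kernel intersection equals the
kernel intersection of the whole family. -/
theorem exists_finite_subfamily_same_kernel
    (k A : Type*) [Field k] [CharZero k] [CommRing A] [IsDomain A] [Algebra k A]
    [Algebra.FiniteType k A] (F : Set (Derivation k A A)) :
    ∃ s : Finset (Derivation k A A), ↑s ⊆ F ∧
      ∀ a : A, (∀ d ∈ F, d a = 0) ↔ (∀ d ∈ s, d a = 0) := by
  classical
  have hFT : Algebra.EssFiniteType k A := Algebra.EssFiniteType.of_finiteType k A
  have hNoeth : IsNoetherianRing A := Algebra.FiniteType.isNoetherianRing k A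
  have hN : IsNoetherian A (Derivation k A A) :=
    isNoetherian_of_linearEquiv (KaehlerDifferential.linearMapEquivDerivation k A)
  -- the set of submodules spanned by finite subsets of F has a maximal element
  let S : Set (Submodule A (Derivation k A A)) :=
    {p | ∃ s : Finset (Derivation k A A), ↑s ⊆ F ∧ p = Submodule.span A (s : Set _)}
  have hSne : S.Nonempty := ⟨⊥, ∅, by simp⟩
  obtain ⟨p, ⟨s, hsF, rfl⟩, hmax⟩ :=
    (set_has_maximal_iff_noetherian.mpr hN) S hSne
  refine ⟨s, hsF, fun a => ⟨fun h d hd => h d (hsF hd), fun h d hdF => ?_⟩⟩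
  -- span s = span F
  have hdin : d ∈ Submodule.span A (s : Set (Derivation k A A)) := by
    by_contra hnot
    have hins : Submodule.span A (s : Set (Derivation k A A)) <
        Submodule.span A (↑(insert d s) : Set (Derivation k A A)) := by
      refine lt_of_le_of_ne (Submodule.span_mono (by simp [Finset.coe_insert])) ?_
      intro he
      apply hnot
      rw [he]
      exact Submodule.subset_span (by simp)
    exact hmax _ ⟨insert d s, by
      rw [Finset.coe_insert]
      exact Set.insert_subset hdF hsF, rfl⟩ hins
  -- evaluation at a is A-linear
  let ev : Derivation k A A →ₗ[A] A :=
    { toFun := fun d => d a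
      map_add' := fun d₁ d₂ => rfl
      map_smul' := fun c d => rfl }
  have : Submodule.span A (s : Set (Derivation k A A)) ≤ LinearMap.ker ev := by
    rw [Submodule.span_le]
    intro x hx
    exact h x hx
  simpa [ev] using this hdin
end

section
/- Let L be a field of characteristic zero and let d be an L-derivation on the formal power series ring L[[t1,...,tn]] (n > 1) that is continuous for the maximal-ideal-adic topology. If there exists x1 in the maximal ideal with d(x1) = 1, then there exist y2, ..., yn such that x1, y2, ..., yn form a system of parameters (i.e., generate the maximal ideal) and d(yi) = 0 for all i; consequently d = ∂/∂x1 in this coordinate system. -/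
/-!
Write `𝔪` for the maximal ideal and `x = x₁`. Since `L[[t]]` is `𝔪`-adically complete, the series
`ψ f = ∑ₖ (-x)ᵏ / k! • dᵏ f` converges; it telescopes under `d`, so `d (ψ f) = 0`, and
`ψ f ≡ f - x * d f` modulo `𝔪²`. As `d x = 1 ∉ 𝔪` while `d (𝔪²) ⊆ 𝔪`, we have `x ∉ 𝔪²`, so `x`
can replace some variable `tⱼ` among the generators `t₁, …, tₙ` of `𝔪`. Replacing every other
`tᵢ` by `ψ tᵢ` changes the generators only modulo `(x) + 𝔪²`, so by Nakayama the new family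
still generates `𝔪`.
-/

open Set MvPowerSeries

theorem Ideal.span_range_le_span_range_update {A ι : Type*} [CommRing A] [Fintype ι]
    [DecidableEq ι] (v c : ι → A) {j : ι} (hc : IsUnit (c j)) :
    span (range v) ≤ span (range (Function.update v j (∑ i, c i * v i))) := by
  set w := Function.update v j (∑ i, c i * v i)
  have hw : ∀ i, w i ∈ span (range w) := fun i => subset_span ⟨i, rfl⟩
  have hv : ∀ i ≠ j, v i ∈ span (range w) := fun i hi => by
    simpa [w, Function.update_of_ne hi] using hw i
  refine span_le.2 ?_
  rintro _ ⟨i, rfl⟩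
  rcases eq_or_ne i j with rfl | hi
  · have hvj : v i = hc.unit⁻¹ * (w i - ∑ k ∈ Finset.univ.erase i, c k * v k) := by
      simp only [w, Function.update_self]
      rw [← Finset.add_sum_erase _ _ (Finset.mem_univ i), add_sub_cancel_right,
        ← mul_assoc, IsUnit.val_inv_mul, one_mul]
    rw [SetLike.mem_coe, hvj]
    exact mul_mem_left _ _ (sub_mem (hw i) (Ideal.sum_mem _ fun k hk =>
      mul_mem_left _ _ (hv k (Finset.ne_of_mem_erase hk))))
  · exact hv i hi

namespace IsLocalRing

variable {A : Type*} [CommRing A] [IsLocalRing A]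

theorem exists_span_range_update_eq_maximalIdeal {ι : Type*} [Fintype ι] [DecidableEq ι]
    {v : ι → A} (hv : Ideal.span (range v) = maximalIdeal A) {x : A}
    (hx : x ∈ maximalIdeal A) (hx_sq : x ∉ maximalIdeal A ^ 2) :
    ∃ j, Ideal.span (range (Function.update v j x)) = maximalIdeal A := by
  obtain ⟨c, rfl⟩ := Ideal.mem_span_range_iff_exists_fun.1 (hv ▸ hx)
  obtain ⟨j, hj⟩ : ∃ j, c j ∉ maximalIdeal A := by
    by_contra! hc
    refine hx_sq (pow_two (maximalIdeal A) ▸ Ideal.sum_mem _ fun i _ => ?_)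
    exact Ideal.mul_mem_mul (hc i) (hv ▸ Ideal.subset_span ⟨i, rfl⟩)
  refine ⟨j, le_antisymm (Ideal.span_le.2 ?_) ?_⟩
  · rintro _ ⟨i, rfl⟩
    rcases eq_or_ne i j with rfl | hi
    · simpa using hx
    · rw [Function.update_of_ne hi, ← hv]
      exact Ideal.subset_span ⟨i, rfl⟩
  · exact hv ▸ Ideal.span_range_le_span_range_update v c (notMem_maximalIdeal.1 hj)

theorem span_eq_maximalIdeal_of_le_sup_sq [IsNoetherianRing A] {s : Set A}
    (hs : s ⊆ maximalIdeal A) (h : maximalIdeal A ≤ Ideal.span s ⊔ maximalIdeal A ^ 2) :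
    Ideal.span s = maximalIdeal A :=
  le_antisymm (Ideal.span_le.2 hs) <|
    Submodule.le_of_le_smul_of_le_jacobson_bot (IsNoetherian.noetherian _)
      (jacobson_eq_maximalIdeal ⊥ bot_ne_top).ge (by rwa [smul_eq_mul, ← pow_two])

theorem span_range_update_eq_maximalIdeal [IsNoetherianRing A] {ι : Type*} [DecidableEq ι]
    {v w : ι → A} {j : ι} {x : A}
    (hv : Ideal.span (range (Function.update v j x)) = maximalIdeal A)
    (hw : ∀ i ≠ j, w i - v i ∈ Ideal.span {x} ⊔ maximalIdeal A ^ 2) :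
    Ideal.span (range (Function.update w j x)) = maximalIdeal A := by
  set u := Function.update w j x
  have hmem : ∀ i, Function.update v j x i ∈ maximalIdeal A := fun i => by
    rw [← hv]
    exact Ideal.subset_span ⟨i, rfl⟩
  have hx : x ∈ maximalIdeal A := by simpa using hmem j
  have hxu : x ∈ Ideal.span (range u) := Ideal.subset_span ⟨j, by simp [u]⟩
  have hspan :
      Ideal.span {x} ⊔ maximalIdeal A ^ 2 ≤ Ideal.span (range u) ⊔ maximalIdeal A ^ 2 :=
    sup_le_sup_right ((Ideal.span_singleton_le_iff_mem _).2 hxu) _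
  have hsq : Ideal.span {x} ⊔ maximalIdeal A ^ 2 ≤ maximalIdeal A :=
    sup_le ((Ideal.span_singleton_le_iff_mem _).2 hx) (Ideal.pow_le_self two_ne_zero)
  refine span_eq_maximalIdeal_of_le_sup_sq ?_ ?_
  · rintro _ ⟨i, rfl⟩
    rcases eq_or_ne i j with rfl | hi
    · simpa [u] using hx
    · have := add_mem (by simpa [Function.update_of_ne hi] using hmem i) (hsq (hw i hi))
      simpa [u, Function.update_of_ne hi] using this
  · conv_lhs => rw [← hv]
    rw [Ideal.span_le]
    rintro _ ⟨i, rfl⟩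
    rcases eq_or_ne i j with rfl | hi
    · rw [Function.update_self]
      exact Ideal.mem_sup_left hxu
    · have hui : u i ∈ Ideal.span (range u) ⊔ maximalIdeal A ^ 2 :=
        Ideal.mem_sup_left (Ideal.subset_span ⟨i, rfl⟩)
      have := sub_mem hui (hspan (hw i hi))
      simpa [u, Function.update_of_ne hi] using this

end IsLocalRing

namespace Derivation

variable {K A : Type*} [Field K] [CommRing A] [Algebra K A]
variable (d : Derivation K A A) (x : A)

/-- Partial sums of the Taylor expansion of `f` along the flow of `d`, taken at time `-x`. -/
noncomputable def flowSum (f : A) (N : ℕ) : A :=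
  ∑ k ∈ Finset.range N, (k.factorial : K)⁻¹ • ((-x) ^ k * d^[k] f)

variable {d x}

theorem map_flowSum_succ [CharZero K] (hdx : d x = 1) (f : A) (N : ℕ) :
    d (flowSum d x f (N + 1)) = (N.factorial : K)⁻¹ • ((-x) ^ N * d^[N + 1] f) := by
  induction N with
  | zero => simp [flowSum]
  | succ N ih =>
    have hfac : ((N + 1).factorial : K)⁻¹ * (N + 1 : ℕ) = (N.factorial : K)⁻¹ := by
      rw [Nat.factorial_succ, Nat.cast_mul]
      field_simp
    rw [flowSum, Finset.sum_range_succ, map_add, ← flowSum, ih, Derivation.map_smul,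
      Derivation.leibniz, Derivation.leibniz_pow, map_neg, hdx, smul_eq_mul, smul_eq_mul,
      Nat.add_sub_cancel, ← Function.iterate_succ_apply' d]
    have hterm : d^[N + 1] f * (N + 1) • (-x) ^ N • (-1 : A) =
        ((N + 1 : ℕ) : K) • -((-x) ^ N * d^[N + 1] f) := by
      rw [Nat.cast_smul_eq_nsmul, smul_eq_mul, nsmul_eq_mul, nsmul_eq_mul]
      ring
    rw [hterm, smul_add, smul_smul, hfac, smul_neg]
    abel

theorem flowSum_sub_flowSum_mem_pow {I : Ideal A} (hx : x ∈ I) (f : A) {m n : ℕ} (h : m ≤ n) :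
    flowSum d x f n - flowSum d x f m ∈ I ^ m := by
  rw [flowSum, flowSum, ← Finset.sum_Ico_eq_sub _ h]
  refine Ideal.sum_mem _ fun k hk => ?_
  refine Submodule.smul_of_tower_mem _ _ (Ideal.mul_mem_right _ _ ?_)
  exact Ideal.pow_le_pow_right (Finset.mem_Ico.1 hk).1 (Ideal.pow_mem_pow (neg_mem hx) k)

theorem flowSum_two (f : A) : flowSum d x f 2 = f - x * d f := by
  simp [flowSum, Finset.sum_range_succ, sub_eq_add_neg]

theorem exists_map_eq_zero_and_sub_mem_sq [CharZero K] {I : Ideal A} [IsAdicComplete I A]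
    (hx : x ∈ I) (hdx : d x = 1) (hcont : ∀ r : ℕ, ∀ a ∈ I ^ r, d a ∈ I ^ (r - 1)) (f : A) :
    ∃ g, d g = 0 ∧ g - (f - x * d f) ∈ I ^ 2 := by
  obtain ⟨g, hg⟩ := IsPrecomplete.prec (I := I) inferInstance (f := flowSum d x f) fun h => by
    rw [SModEq.sub_mem, smul_eq_mul, Ideal.mul_top, ← neg_sub]
    exact neg_mem (flowSum_sub_flowSum_mem_pow hx f h)
  simp only [SModEq.sub_mem, smul_eq_mul, Ideal.mul_top] at hg
  refine ⟨g, IsHausdorff.haus (I := I) inferInstance _ fun N => ?_, ?_⟩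
  · rw [SModEq.zero, smul_eq_mul, Ideal.mul_top]
    have hsplit : d g = d (flowSum d x f (N + 1)) - d (flowSum d x f (N + 1) - g) := by
      rw [map_sub, sub_sub_cancel]
    rw [hsplit, map_flowSum_succ hdx]
    refine sub_mem (Submodule.smul_of_tower_mem _ _ (Ideal.mul_mem_right _ _
      (Ideal.pow_mem_pow (neg_mem hx) N))) ?_
    simpa using hcont (N + 1) _ (hg (N + 1))
  · rw [← flowSum_two, ← neg_sub]
    exact neg_mem (hg 2)

end Derivation

namespace MvPowerSeries

variable {σ R : Type*} [CommRing R]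

section DivMinVar

variable [LinearOrder σ]

open scoped Classical

/-- The monomials of `f` whose least variable is `i`, divided by `X i`. -/
noncomputable def divMinVar (f : MvPowerSeries σ R) (i : σ) : MvPowerSeries σ R :=
  fun m => if ∀ j < i, m j = 0 then coeff (m + Finsupp.single i 1) f else 0

theorem coeff_X_mul_divMinVar (f : MvPowerSeries σ R) (i : σ) (m : σ →₀ ℕ) :
    coeff m (X i * divMinVar f i) =
      if 0 < m i ∧ ∀ j < i, m j = 0 then coeff m f else 0 := by
  rw [X_def, coeff_monomial_mul, one_mul]
  by_cases hi : Finsupp.single i 1 ≤ m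
  · have hpos : 0 < m i := Finsupp.single_le_iff.1 hi
    have hsub : ∀ j < i, ((m - Finsupp.single i 1 : σ →₀ ℕ) j) = m j := fun j hj => by
      simp [hj.ne']
    rw [if_pos hi]
    change (if ∀ j < i, ((m - Finsupp.single i 1 : σ →₀ ℕ) j) = 0 then _ else _) = _
    simp only [tsub_add_cancel_of_le hi, hpos, true_and]
    exact if_congr (forall₂_congr fun j hj => by rw [hsub j hj]) rfl rfl
  · rw [if_neg hi, if_neg fun h => hi (Finsupp.single_le_iff.2 h.1)]

theorem sum_X_mul_divMinVar [Fintype σ] {f : MvPowerSeries σ R} (hf : constantCoeff f = 0) :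
    ∑ i, X i * divMinVar f i = f := by
  ext m
  simp only [map_sum, coeff_X_mul_divMinVar]
  by_cases hm : m = 0
  · subst hm
    simpa using hf.symm
  have hne : m.support.Nonempty := Finsupp.support_nonempty_iff.2 hm
  have hmin : ∀ i, (0 < m i ∧ ∀ j < i, m j = 0) ↔ i = m.support.min' hne := by
    intro i
    constructor
    · rintro ⟨hpos, hlt⟩
      refine le_antisymm ?_ (m.support.min'_le i (Finsupp.mem_support_iff.2 hpos.ne'))
      by_contra! h
      exact Finsupp.mem_support_iff.1 (m.support.min'_mem hne) (hlt _ h)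
    · rintro rfl
      refine ⟨Nat.pos_of_ne_zero (Finsupp.mem_support_iff.1 (m.support.min'_mem hne)), ?_⟩
      intro j hj
      by_contra h
      exact (m.support.min'_le j (Finsupp.mem_support_iff.2 h)).not_gt hj
  simp only [hmin, Finset.sum_ite_eq', Finset.mem_univ, if_true]

theorem order_le_order_divMinVar_add_one (f : MvPowerSeries σ R) (i : σ) :
    f.order ≤ (divMinVar f i).order + 1 := by
  rcases eq_or_ne (divMinVar f i).order ⊤ with htop | htop
  · simp [htop]
  obtain ⟨m, hm, hdeg⟩ := exists_coeff_ne_zero_and_order (ENat.natCast_toNat htop)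
  have hcoeff : coeff (m + Finsupp.single i 1) f ≠ 0 := by
    change (if ∀ j < i, m j = 0 then _ else _) ≠ 0 at hm
    split_ifs at hm
    exacts [hm, absurd rfl hm]
  calc f.order ≤ (m + Finsupp.single i 1).degree := order_le hcoeff
    _ = (divMinVar f i).order + 1 := by simp [← hdeg]

end DivMinVar

section Finite

variable [Finite σ]

theorem mem_ker_constantCoeff_pow_iff {r : ℕ} {f : MvPowerSeries σ R} :
    f ∈ RingHom.ker (constantCoeff (σ := σ) (R := R)) ^ r ↔ (r : ℕ∞) ≤ f.order := by
  cases nonempty_fintype σ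
  let : LinearOrder σ := LinearOrder.lift' _ (Fintype.equivFin σ).injective
  induction r generalizing f with
  | zero => simp
  | succ r ih =>
    constructor
    · intro hf
      rw [pow_succ] at hf
      refine Submodule.mul_induction_on hf (fun a ha b hb => ?_) (fun a b ha hb => ?_)
      · have hb' : 1 ≤ b.order := one_le_order_iff_constCoeff_eq_zero.2 hb
        calc ((r + 1 : ℕ) : ℕ∞) = r + 1 := by push_cast; rfl
          _ ≤ a.order + b.order := add_le_add (ih.1 ha) hb'
          _ ≤ (a * b).order := le_order_mul
      · exact (le_min ha hb).trans min_order_le_add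
    · intro hf
      have hf0 : constantCoeff f = 0 :=
        one_le_order_iff_constCoeff_eq_zero.1 (le_trans (by simp) hf)
      rw [← sum_X_mul_divMinVar hf0, pow_succ']
      refine Ideal.sum_mem _ fun i _ => Ideal.mul_mem_mul (constantCoeff_X i) (ih.2 ?_)
      have := hf.trans (order_le_order_divMinVar_add_one f i)
      push_cast at this
      exact (ENat.add_le_add_iff_right ENat.one_ne_top).1 this

theorem ker_constantCoeff_eq_span_range_X :
    RingHom.ker (constantCoeff (σ := σ) (R := R)) = Ideal.span (Set.range X) := by
  cases nonempty_fintype σ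
  let : LinearOrder σ := LinearOrder.lift' _ (Fintype.equivFin σ).injective
  refine le_antisymm (fun f hf => ?_) (Ideal.span_le.2 ?_)
  · rw [← sum_X_mul_divMinVar hf]
    exact Ideal.sum_mem _ fun i _ => Ideal.mul_mem_right _ _ (Ideal.subset_span ⟨i, rfl⟩)
  · rintro _ ⟨i, rfl⟩
    exact constantCoeff_X i

instance : IsAdicComplete (RingHom.ker (constantCoeff (σ := σ) (R := R)))
    (MvPowerSeries σ R) where
  haus' f hf := by
    simp only [SModEq.zero, smul_eq_mul, Ideal.mul_top, mem_ker_constantCoeff_pow_iff] at hf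
    exact order_eq_top_iff.1 (ENat.eq_top_iff_forall_ge.2 hf)
  prec' s hs := by
    simp only [SModEq.sub_mem, smul_eq_mul, Ideal.mul_top, mem_ker_constantCoeff_pow_iff] at hs ⊢
    let lim : MvPowerSeries σ R := fun m => coeff m (s (m.degree + 1))
    refine ⟨lim, fun N => le_order fun m hm => ?_⟩
    have hle : m.degree + 1 ≤ N := by exact_mod_cast hm
    have := coeff_of_lt_order (d := m)
      ((ENat.natCast_lt_natCast.2 m.degree.lt_succ_self).trans_le (hs hle))
    rw [map_sub, sub_eq_zero] at this ⊢
    exact this.symm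

end Finite

theorem ker_constantCoeff_eq_maximalIdeal {K : Type*} [Field K] :
    RingHom.ker (constantCoeff (σ := σ) (R := K)) = IsLocalRing.maximalIdeal _ :=
  IsLocalRing.eq_maximalIdeal <| RingHom.ker_isMaximal_of_surjective _ fun a => ⟨C a, by simp⟩

end MvPowerSeries

/-- If d is a continuous L-derivation on L[[t₁,...,tₙ]] (n > 1, char L = 0) and
x₁ lies in the maximal ideal M with d(x₁) = 1, then there is a system of
parameters x₁, y₂, ..., yₙ (generating M) with d(yᵢ) = 0 for all i ≥ 2. -/
theorem derivation_straightening
    (L : Type*) [Field L] [CharZero L] (n : ℕ) (hn : 1 < n)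
    (d : Derivation L (MvPowerSeries (Fin n) L) (MvPowerSeries (Fin n) L))
    (M : Ideal (MvPowerSeries (Fin n) L))
    (hM : M = RingHom.ker (constantCoeff : MvPowerSeries (Fin n) L →+* L))
    (hcont : ∀ r : ℕ, ∀ x ∈ M ^ r, d x ∈ M ^ (r - 1))
    (x1 : MvPowerSeries (Fin n) L) (hx1 : x1 ∈ M) (hdx1 : d x1 = 1) :
    ∃ y : Fin n → MvPowerSeries (Fin n) L,
      y ⟨0, by omega⟩ = x1 ∧ Ideal.span (Set.range y) = M ∧
      ∀ i : Fin n, i ≠ ⟨0, by omega⟩ → d (y i) = 0 := by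
  subst hM
  have hmax := ker_constantCoeff_eq_maximalIdeal (σ := Fin n) (K := L)
  have hx1_sq : x1 ∉ RingHom.ker constantCoeff ^ 2 := fun h => by
    simpa [hdx1] using hcont 2 x1 h
  obtain ⟨j, hj⟩ := IsLocalRing.exists_span_range_update_eq_maximalIdeal
    (ker_constantCoeff_eq_span_range_X.symm.trans hmax) (hmax ▸ hx1) (hmax ▸ hx1_sq)
  choose g hg_ker hg_sq using Derivation.exists_map_eq_zero_and_sub_mem_sq hx1 hdx1 hcont
  set z := Function.update (fun t => g (X t)) j x1
  refine ⟨z ∘ Equiv.swap ⟨0, by omega⟩ j, by simp [z], ?_, fun i hi => ?_⟩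
  · rw [(Equiv.surjective _).range_comp, hmax]
    refine IsLocalRing.span_range_update_eq_maximalIdeal hj fun t _ => ?_
    rw [← hmax]
    have hsplit : g (X t) - X t = (g (X t) - (X t - x1 * d (X t))) - x1 * d (X t) := by ring
    rw [hsplit]
    exact sub_mem (Ideal.mem_sup_right (hg_sq _))
      (Ideal.mem_sup_left (Ideal.mul_mem_right _ _ (Ideal.mem_span_singleton_self x1)))
  · have hij : Equiv.swap ⟨0, by omega⟩ j i ≠ j := by
      rwa [Ne, Equiv.swap_apply_eq_iff, Equiv.swap_apply_right]
    simp [z, Function.update_of_ne hij, hg_ker]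
end

section
/- Let A be an integral k-algebra of finite type over a field k of characteristic zero, B a subalgebra of A, and d_B a k-derivation on B. Then there exist a nonzero element a ∈ A and a k-derivation d_A on A such that d_A restricted to B equals a·d_B. -/
/-!
Let `K` be the fraction field of `A`. Since `char k = 0`, the extension `Frac B → K` is separable
over a purely transcendental one, hence formally smooth, and so is `B → K`. Formal smoothness
lifts `id : K → K` through `K[ε] → K` compatibly with `b ↦ b + dB(b) ε` on `B`, which is exactly a
derivation `D` of `K` extending `dB`. Finally, `D` maps the finitely many generators of `A` into
`a⁻¹ A` for a common denominator `a`, so `a • D` maps all of `A` into `A`.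
-/

open IsLocalization TrivSqZeroExt

theorem Algebra.FormallySmooth.of_charZero (F K : Type*) [Field F] [Field K] [Algebra F K]
    [CharZero F] : Algebra.FormallySmooth F K := by
  obtain ⟨s, hs⟩ := exists_isTranscendenceBasis F K
  have : Algebra.IsAlgebraic (IntermediateField.adjoin F (Set.range ((↑) : s → K))) K :=
    hs.isAlgebraic_field
  have : Algebra.IsSeparable (IntermediateField.adjoin F (Set.range ((↑) : s → K))) K :=
    Algebra.IsSeparable.of_integral _ _
  exact .of_algebraicIndependent_of_isSeparable hs.1

attribute [local instance] FractionRing.liftAlgebra in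
theorem Algebra.FormallySmooth.of_faithfulSMul_of_charZero (B K : Type*) [CommRing B] [Field K]
    [CharZero K] [Algebra B K] [FaithfulSMul B K] : Algebra.FormallySmooth B K := by
  have := IsDomain.of_faithfulSMul B K
  have : CharZero (FractionRing B) :=
    (RingHom.charZero_iff (algebraMap (FractionRing B) K).injective).mpr ‹_›
  have : FormallySmooth B (FractionRing B) := .of_isLocalization (nonZeroDivisors B)
  have : FormallySmooth (FractionRing B) K := .of_charZero _ _
  exact .comp B (FractionRing B) K

namespace Derivation

section Extension

variable {R S T : Type*} [CommRing R] [CommRing S] [CommRing T] [Algebra R S] [Algebra R T]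
  [Algebra S T]

def toTrivSqZeroExt (d : Derivation R S T) : S →+* TrivSqZeroExt T T where
  toFun s := (algebraMap S T s, d s)
  map_one' := by ext <;> simp
  map_mul' x y := by
    ext
    · exact map_mul (algebraMap S T) x y
    · show d (x * y) = algebraMap S T x • d y + MulOpposite.op (algebraMap S T y) • d x
      simp [Algebra.smul_def, add_comm, mul_comm]
  map_zero' := by ext <;> simp
  map_add' x y := by
    ext
    · exact map_add (algebraMap S T) x y
    · exact d.map_add x y

@[simp]
theorem fst_toTrivSqZeroExt (d : Derivation R S T) (s : S) :
    (d.toTrivSqZeroExt s).fst = algebraMap S T s :=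
  rfl

@[simp]
theorem snd_toTrivSqZeroExt (d : Derivation R S T) (s : S) : (d.toTrivSqZeroExt s).snd = d s :=
  rfl

theorem exists_extend_of_formallySmooth [IsScalarTower R S T] [Algebra.FormallySmooth S T]
    (d : Derivation R S T) : ∃ D : Derivation R T T, ∀ s, D (algebraMap S T s) = d s := by
  let := d.toTrivSqZeroExt.toAlgebra
  let π : TrivSqZeroExt T T →ₐ[S] T :=
    { (fstHom T T T).toRingHom with commutes' := fst_toTrivSqZeroExt d }
  -- `L x = x + (D x) ε`, and multiplicativity of `L` is the Leibniz rule for `D`.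
  let L := Algebra.FormallySmooth.liftOfSurjective (AlgHom.id S T) π (fun x => ⟨inl x, rfl⟩)
    ⟨2, kerIdeal_sq T T⟩
  have hL x : (L x).fst = x := Algebra.FormallySmooth.liftOfSurjective_apply _ π _ _ x
  have hLS s : L (algebraMap S T s) = d.toTrivSqZeroExt s := L.commutes s
  have hLR r : L (algebraMap R T r) = inl (algebraMap R T r) := by
    rw [IsScalarTower.algebraMap_apply R S T, hLS]
    ext <;> simp
  let D : Derivation R T T :=
    { toFun x := (L x).snd
      map_add' x y := by simp
      map_smul' r x := by simp [Algebra.smul_def, hLR]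
      map_one_eq_zero' := by simp
      leibniz' x y := by
        show (L (x * y)).snd = x * (L y).snd + y * (L x).snd
        simp [hL, mul_comm, add_comm] }
  exact ⟨D, fun s => by simp [D, hLS]⟩

end Extension

section ClearDenominators

variable {R A S : Type*} [CommRing R] [CommRing A] [CommRing S] [Algebra R A] [Algebra A S]
  [Algebra R S]

def isIntegerSubalgebra (D : Derivation R A S) : Subalgebra R A where
  carrier := {x | IsInteger A (D x)}
  zero_mem' := by simpa using isInteger_zero
  add_mem' {x y} hx hy := by simpa using isInteger_add hx hy
  mul_mem' {x y} hx hy := by simpa using isInteger_add (isInteger_smul hy) (isInteger_smul hx)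
  algebraMap_mem' r := by simpa using isInteger_zero

theorem exists_smul_isInteger [Algebra.FiniteType R A] (M : Submonoid A)
    [IsLocalization M S] (D : Derivation R A S) : ∃ m : M, ∀ x, IsInteger A ((m : A) • D x) := by
  obtain ⟨s, hs⟩ := Algebra.FiniteType.out (R := R) (A := A)
  obtain ⟨m, hm⟩ := exist_integer_multiples M s D
  have : Algebra.adjoin R (s : Set A) ≤ ((m : A) • D).isIntegerSubalgebra :=
    Algebra.adjoin_le fun x hx => hm x hx
  exact ⟨m, fun x => this (hs ▸ Algebra.mem_top)⟩

noncomputable def ofIsInteger (hinj : Function.Injective (algebraMap A S)) (D : Derivation R A S)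
    (hD : ∀ x, IsInteger A (D x)) : Derivation R A A :=
  have hD' x : ∃ a, algebraMap A S a = D x := hD x
  let f x := (hD' x).choose
  have h x : algebraMap A S (f x) = D x := (hD' x).choose_spec
  { toFun := f
    map_add' x y := hinj (by simp [h])
    map_smul' r x := hinj (by simp [h, Algebra.smul_def])
    map_one_eq_zero' := hinj (by simp [h])
    leibniz' x y := hinj (by simp [h, Algebra.smul_def]) }

theorem algebraMap_ofIsInteger (hinj : Function.Injective (algebraMap A S)) (D : Derivation R A S)
    (hD : ∀ x, IsInteger A (D x)) (x : A) :
    algebraMap A S (D.ofIsInteger hinj hD x) = D x :=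
  (hD x).choose_spec

end ClearDenominators

end Derivation

/-- A k-derivation on a subalgebra B of an integral finite-type k-algebra A
(char k = 0) can, after multiplication by a suitable nonzero a ∈ A, be extended
to a k-derivation on A. -/
theorem extend_derivation_up_to_factor
    (k A : Type*) [Field k] [CharZero k] [CommRing A] [IsDomain A] [Algebra k A]
    [Algebra.FiniteType k A] (B : Subalgebra k A) (dB : Derivation k B B) :
    ∃ (a : A) (dA : Derivation k A A), a ≠ 0 ∧
      ∀ b : B, dA (b : A) = a * ((dB b : B) : A) := by
  let K := FractionRing A
  have hAK : Function.Injective (algebraMap A K) := IsFractionRing.injective A K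
  have : CharZero K := charZero_of_injective_algebraMap (algebraMap k K).injective
  have : FaithfulSMul B K := (faithfulSMul_iff_algebraMap_injective B K).mpr <| by
    rw [IsScalarTower.algebraMap_eq B A K]
    exact hAK.comp Subtype.val_injective
  have : Algebra.FormallySmooth B K := .of_faithfulSMul_of_charZero B K
  obtain ⟨D, hD⟩ := ((Algebra.linearMap B K).compDer dB).exists_extend_of_formallySmooth
  obtain ⟨m, hm⟩ := (D.compAlgebraMap A).exists_smul_isInteger (nonZeroDivisors A)
  refine ⟨m, ((m : A) • D.compAlgebraMap A).ofIsInteger hAK hm, nonZeroDivisors.coe_ne_zero m,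
    fun b => hAK ?_⟩
  have hb : algebraMap A K b = algebraMap B K b := (IsScalarTower.algebraMap_apply B A K b).symm
  rw [Derivation.algebraMap_ofIsInteger, Derivation.smul_apply, Derivation.compAlgebraMap_apply,
    hb, hD]
  simp [Algebra.smul_def, IsScalarTower.algebraMap_apply B A K]
end

section
/- In A = ℂ[x,y] with derivations d1 = x ∂/∂x and d2 = y ∂/∂y, the derivation λ1 d1 + λ2 d2 (with (λ1,λ2) ≠ (0,0)) admits a first integral if and only if λ1 = 0, or λ2 = 0, or λ1/λ2 is a negative rational number. -/
/-!
The derivation `∑ wᵢ Xᵢ ∂ᵢ` acts diagonally on monomials: it multiplies `X^m` by the weight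
`∑ mᵢ wᵢ`. Its kernel therefore consists of the polynomials all of whose monomials have weight
zero, and it contains a nonconstant polynomial exactly when some nonzero exponent `(q, p)`
satisfies `q λ₁ + p λ₂ = 0`.
-/

open MvPolynomial

namespace MvPolynomial

variable {σ R M : Type*} [CommSemiring R]

theorem coeff_X_mul_pderiv (i : σ) (m : σ →₀ ℕ) (f : MvPolynomial σ R) :
    coeff m (X i * pderiv i f) = m i • coeff m f := by
  induction f using MvPolynomial.induction_on' with
  | monomial n a =>
    classical
    rw [X_mul_pderiv_monomial, coeff_smul, coeff_monomial]
    split_ifs with h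
    · rw [h]
    · rw [smul_zero, smul_zero]
  | add p q hp hq => rw [map_add, mul_add, coeff_add, coeff_add, hp, hq, smul_add]

theorem coeff_sum_smul_X_mul_pderiv [Fintype σ] (w : σ → R) (m : σ →₀ ℕ)
    (f : MvPolynomial σ R) :
    coeff m (∑ i, w i • (X i * pderiv i f)) = Finsupp.weight w m * coeff m f := by
  simp only [coeff_sum, coeff_smul, coeff_X_mul_pderiv, Finsupp.weight_eq_sum, Finset.sum_mul,
    smul_eq_mul, nsmul_eq_mul]
  exact Finset.sum_congr rfl fun i _ => by ring

theorem sum_smul_X_mul_pderiv_eq_zero_iff [Fintype σ] [NoZeroDivisors R] (w : σ → R)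
    (f : MvPolynomial σ R) :
    ∑ i, w i • (X i * pderiv i f) = 0 ↔ f.IsWeightedHomogeneous w 0 := by
  simp only [MvPolynomial.ext_iff, coeff_sum_smul_X_mul_pderiv, coeff_zero, mul_eq_zero,
    IsWeightedHomogeneous]
  exact forall_congr' fun m => or_iff_not_imp_right

theorem exists_coeff_ne_zero_of_ne_C {f : MvPolynomial σ R} (hf : ∀ c, f ≠ C c) :
    ∃ m ≠ 0, coeff m f ≠ 0 := by
  by_contra! h
  refine hf (coeff 0 f) (MvPolynomial.ext _ _ fun m => ?_)
  classical
  rw [coeff_C]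
  split_ifs with hm
  · rw [hm]
  · exact h m (Ne.symm hm)

theorem exists_ne_C_isWeightedHomogeneous_zero_iff [Nontrivial R] [AddCommMonoid M]
    (w : σ → M) :
    (∃ f : MvPolynomial σ R, (∀ c, f ≠ C c) ∧ f.IsWeightedHomogeneous w 0) ↔
      ∃ m : σ →₀ ℕ, m ≠ 0 ∧ Finsupp.weight w m = 0 := by
  constructor
  · rintro ⟨f, hf, hw⟩
    obtain ⟨m, hm, hcoeff⟩ := exists_coeff_ne_zero_of_ne_C hf
    exact ⟨m, hm, hw hcoeff⟩
  · rintro ⟨m, hm, hw⟩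
    refine ⟨monomial m 1, fun c => ?_, isWeightedHomogeneous_monomial w m 1 hw⟩
    rw [C_apply, Ne, monomial_eq_monomial_iff]
    simp [hm]

end MvPolynomial

theorem exists_nat_mul_add_eq_zero_iff {K : Type*} [Semiring K] [NoZeroDivisors K] [CharZero K]
    (a b : K) :
    (∃ q p : ℕ, (q ≠ 0 ∨ p ≠ 0) ∧ (q : K) * a + p * b = 0) ↔
      a = 0 ∨ b = 0 ∨ ∃ p q : ℕ, 0 < p ∧ 0 < q ∧ (q : K) * a + p * b = 0 := by
  constructor
  · rintro ⟨q, p, hqp, h⟩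
    rcases Nat.eq_zero_or_pos q with rfl | hq
    · simp_all
    rcases Nat.eq_zero_or_pos p with rfl | hp
    · simp_all
    exact Or.inr (Or.inr ⟨p, q, hp, hq, h⟩)
  · rintro (rfl | rfl | ⟨p, q, hp, hq, h⟩)
    · exact ⟨1, 0, by simp⟩
    · exact ⟨0, 1, by simp⟩
    · exact ⟨q, p, Or.inl hq.ne', h⟩

theorem exists_ne_zero_weight_fin_two_eq_zero_iff {K : Type*} [Semiring K] (a b : K) :
    (∃ m : Fin 2 →₀ ℕ, m ≠ 0 ∧ Finsupp.weight ![a, b] m = 0) ↔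
      ∃ q p : ℕ, (q ≠ 0 ∨ p ≠ 0) ∧ (q : K) * a + p * b = 0 := by
  simp only [Finsupp.weight_eq_sum, Fin.sum_univ_two, nsmul_eq_mul, Matrix.cons_val_zero,
    Matrix.cons_val_one, Matrix.cons_val_fin_one]
  constructor
  · rintro ⟨m, hm, h⟩
    refine ⟨m 0, m 1, ?_, h⟩
    by_contra! h0
    exact hm (Finsupp.ext fun i => by fin_cases i <;> simp [h0])
  · rintro ⟨q, p, hqp, h⟩
    refine ⟨Finsupp.equivFunOnFinite.symm ![q, p], ?_, by simpa using h⟩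
    rw [Ne, Finsupp.ext_iff]
    simpa [Fin.forall_fin_two, or_iff_not_imp_left] using hqp

theorem first_integral_iff_rational_slope_general
    (l1 l2 : ℂ) :
    (∃ f : MvPolynomial (Fin 2) ℂ, (∀ c : ℂ, f ≠ C c) ∧
        l1 • (X 0 * pderiv 0 f) + l2 • (X 1 * pderiv 1 f) = 0) ↔
      (l1 = 0 ∨ l2 = 0 ∨
        ∃ p q : ℕ, 0 < p ∧ 0 < q ∧ (q : ℂ) * l1 + (p : ℂ) * l2 = 0) := by
  have euler : ∀ f : MvPolynomial (Fin 2) ℂ, l1 • (X 0 * pderiv 0 f) + l2 • (X 1 * pderiv 1 f) =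
      ∑ i, ![l1, l2] i • (X i * pderiv i f) := fun f => by simp [Fin.sum_univ_two]
  simp_rw [euler, sum_smul_X_mul_pderiv_eq_zero_iff]
  rw [exists_ne_C_isWeightedHomogeneous_zero_iff, exists_ne_zero_weight_fin_two_eq_zero_iff,
    exists_nat_mul_add_eq_zero_iff]

/-- In ℂ[x,y], with d₁ = x ∂/∂x and d₂ = y ∂/∂y, the derivation λ₁d₁ + λ₂d₂
(with (λ₁,λ₂) ≠ (0,0)) has a first integral iff λ₁ = 0, or λ₂ = 0, or λ₁/λ₂ is
a negative rational number. -/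
theorem first_integral_iff_rational_slope
    (l1 l2 : ℂ) (h : ¬(l1 = 0 ∧ l2 = 0)) :
    (∃ f : MvPolynomial (Fin 2) ℂ, (∀ c : ℂ, f ≠ C c) ∧
        l1 • (X 0 * pderiv 0 f) + l2 • (X 1 * pderiv 1 f) = 0) ↔
      (l1 = 0 ∨ l2 = 0 ∨
        ∃ p q : ℕ, 0 < p ∧ 0 < q ∧ (q : ℂ) * l1 + (p : ℂ) * l2 = 0) :=
  first_integral_iff_rational_slope_general l1 l2
end
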